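/- Let G be the simple graph on vertex set {0, 1, 2, 3, 4, 5, 6} whose edge set consists of the heptagon edges {{0,1}, {1,2}, {2,3}, {3,4}, {4,5}, {5,6}, {6,0}} together with the chords {{0,2}, {0,3}, {3,5}, {0,5}} (a triangulation of the heptagon, hence a maximal outerplanar graph of order 7). Then for every integer k ≥ 0, G is k-edge magic if and only if k ≡ 2 (mod 7). -/

import Mathlib

open scoped Classical in
/-- A finite simple graph `G` on a finite vertex type is `k`-edge magic if there is a
labeling of its edges that is a bijection onto `{k, k+1, ..., k+q-1}` (where `q` is the
number of edges) such that all the induced vertex sums (the sum of the labels of the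
edges incident to a vertex) are congruent modulo the number of vertices. -/
def IsKEdgeMagic {V : Type*} [Fintype V] (G : SimpleGraph V) (k : ℕ) : Prop :=
  ∃ f : Sym2 V → ℕ,
    Set.BijOn f G.edgeSet ((fun i => k + i) '' Set.Iio G.edgeFinset.card) ∧
    ∃ c : ZMod (Fintype.card V),
      ∀ v : V, ((∑ e ∈ G.incidenceFinset v, f e : ℕ) : ZMod (Fintype.card V)) = c

/-- A concrete simple graph on `Fin 7`. -/
def G5 : SimpleGraph (Fin 7) where
  Adj a b := a ≠ b ∧ s(a,b) ∈ ({s(0,1), s(1,2), s(2,3), s(3,4), s(4,5), s(5,6), s(6,0), s(0,2), s(0,3), s(3,5), s(0,5)} : Finset (Sym2 (Fin 7)))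
  symm := ⟨fun a b h => ⟨h.1.symm, by rw [show s(b,a) = s(a,b) from Sym2.eq_swap]; exact h.2⟩⟩
  loopless := ⟨fun a h => h.1 rfl⟩

/-!
Summing the vertex sums counts every label twice, so a `k`-edge-magic labeling of a graph with
`p` vertices and `q` edges forces `p ∣ 2 (k + (k + 1) + ⋯ + (k + q - 1)) = q (2k + q - 1)`;
for `p = 7` and `q = 11` this is `7 ∣ 22k + 110`, i.e. `k ≡ 2 (mod 7)`. Conversely, adding `p m`
to every label changes each vertex sum by a multiple of `p`, so one `2`-edge-magic labeling of
`G5` suffices.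
-/

open Finset

theorem SimpleGraph.sum_sum_incidenceFinset {V M : Type*} [Fintype V] [DecidableEq V]
    [AddCommMonoid M] (G : SimpleGraph V) [Fintype G.edgeSet] [∀ v, Fintype (G.neighborSet v)]
    (f : Sym2 V → M) :
    ∑ v, ∑ e ∈ G.incidenceFinset v, f e = 2 • ∑ e ∈ G.edgeFinset, f e := by
  simp_rw [incidenceFinset_eq_filter, sum_filter]
  rw [sum_comm, smul_sum]
  refine sum_congr rfl fun e he => ?_
  have hends : ({v | v ∈ e} : Finset V) = e.toFinset := by ext; simp [Sym2.mem_toFinset]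
  rw [← sum_filter, sum_const, hends,
    Sym2.card_toFinset_of_not_isDiag e (G.not_isDiag_of_mem_edgeSet (mem_edgeFinset.mp he))]

theorem List.bijOn_add_idxOf {α : Type*} [DecidableEq α] {L : List α} (hL : L.Nodup) (k : ℕ) :
    Set.BijOn (fun a => k + L.idxOf a) {a | a ∈ L} ((k + ·) '' Set.Iio L.length) := by
  refine ⟨fun a ha => ⟨_, idxOf_lt_length_of_mem ha, rfl⟩, fun a ha b _ hab => ?_, ?_⟩
  · exact (idxOf_inj ha).mp (by simpa using hab)
  · rintro _ ⟨i, hi, rfl⟩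
    exact ⟨L[i], getElem_mem hi, by simp [hL.idxOf_getElem i hi]⟩

namespace IsKEdgeMagic

variable {V : Type*} [Fintype V] {G : SimpleGraph V} {k : ℕ}

open scoped Classical in
theorem card_dvd (h : IsKEdgeMagic G k) :
    Fintype.card V ∣ #G.edgeFinset * (2 * k + #G.edgeFinset - 1) := by
  obtain ⟨f, hf, c, hc⟩ := h
  set q := #G.edgeFinset
  have hf' : Set.BijOn f ↑G.edgeFinset ↑((range q).image (k + ·)) := by
    rwa [SimpleGraph.coe_edgeFinset, coe_image, coe_range]
  have hlabels : ∑ e ∈ G.edgeFinset, f e = ∑ i ∈ range q, (k + i) :=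
    calc ∑ e ∈ G.edgeFinset, f e = ∑ x ∈ (range q).image (k + ·), x :=
          sum_nbij f hf'.mapsTo hf'.injOn hf'.surjOn fun _ _ => rfl
      _ = ∑ i ∈ range q, (k + i) := sum_image fun _ _ _ _ => Nat.add_left_cancel
  have hgauss : 2 * ∑ i ∈ range q, (k + i) = q * (2 * k + q - 1) := by
    rw [sum_add_distrib, sum_const, card_range, smul_eq_mul, mul_add, mul_comm 2 (∑ i ∈ _, i),
      sum_range_id_mul_two]
    rcases q with _ | q
    · simp
    · rw [show 2 * k + (q + 1) - 1 = 2 * k + q by omega, Nat.add_sub_cancel]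
      ring
  have hzero : ((∑ v, ∑ e ∈ G.incidenceFinset v, f e : ℕ) : ZMod (Fintype.card V)) = 0 := by
    simp [Nat.cast_sum, hc]
  rw [G.sum_sum_incidenceFinset, smul_eq_mul, hlabels, hgauss] at hzero
  exact (ZMod.natCast_eq_zero_iff _ _).mp hzero

theorem add_card_mul (h : IsKEdgeMagic G k) (m : ℕ) :
    IsKEdgeMagic G (k + Fintype.card V * m) := by
  obtain ⟨f, hf, c, hc⟩ := h
  refine ⟨(· + Fintype.card V * m) ∘ f, ?_, c, fun v => ?_⟩
  · have hshift (s : Set ℕ) : Set.BijOn (· + Fintype.card V * m) ((k + ·) '' s)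
        ((k + Fintype.card V * m + ·) '' s) := by
      convert (add_left_injective (Fintype.card V * m)).injOn.bijOn_image using 1
      rw [Set.image_image]
      exact Set.image_congr fun _ _ => add_right_comm ..
    exact (hshift _).comp hf
  · simp [sum_add_distrib, hc]

end IsKEdgeMagic

namespace G5

/-- The edges of `G5` in the order of the labels `2, …, 12` of a `2`-edge-magic labeling. -/
def edgeList : List (Sym2 (Fin 7)) :=
  [s(0,1), s(1,2), s(2,3), s(0,2), s(0,3), s(3,5), s(6,0), s(3,4), s(4,5), s(5,6), s(0,5)]

theorem edgeSet_eq : G5.edgeSet = {e | e ∈ edgeList} := by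
  ext e
  induction e using Sym2.ind with
  | _ a b =>
    show a ≠ b ∧ _ ↔ _
    revert a b
    decide

theorem edgeFinset_eq [Fintype G5.edgeSet] : G5.edgeFinset = edgeList.toFinset := by
  ext e
  simp [edgeSet_eq]

theorem card_edgeFinset [Fintype G5.edgeSet] : #G5.edgeFinset = 11 := by
  rw [edgeFinset_eq]
  rfl

theorem mem_incidenceFinset [DecidableEq (Fin 7)] (v : Fin 7) [Fintype (G5.neighborSet v)]
    (e : Sym2 (Fin 7)) : e ∈ G5.incidenceFinset v ↔ e ∈ edgeList ∧ v ∈ e := by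
  rw [SimpleGraph.mem_incidenceFinset, SimpleGraph.incidenceSet, edgeSet_eq]
  rfl

theorem isKEdgeMagic_two : IsKEdgeMagic G5 2 := by
  refine ⟨fun e => 2 + edgeList.idxOf e, ?_, 5, fun v => ?_⟩
  · simp only [edgeSet_eq, card_edgeFinset]
    exact List.bijOn_add_idxOf (by decide) 2
  · have hsums : ∀ v : Fin 7, ((∑ e ∈ edgeList.toFinset.filter (v ∈ ·), (2 + edgeList.idxOf e) : ℕ)
        : ZMod (Fintype.card (Fin 7))) = 5 := by
      decide
    convert hsums v using 3
    ext e
    simp only [mem_incidenceFinset, mem_filter, List.mem_toFinset]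

end G5

theorem kEdgeMagic_iff_5 (k : ℕ) : IsKEdgeMagic G5 k ↔ k ≡ 2 [MOD 7] := by
  refine ⟨fun h => ?_, fun hk => ?_⟩
  · have hdvd := h.card_dvd
    simp only [G5.card_edgeFinset, Fintype.card_fin] at hdvd
    unfold Nat.ModEq
    omega
  · obtain ⟨m, rfl⟩ : ∃ m, k = 2 + 7 * m := ⟨k / 7, by unfold Nat.ModEq at hk; omega⟩
    simpa using G5.isKEdgeMagic_two.add_card_mul m
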